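/- For complex q, ζ with 0<|q|<1 and |q|^{1/2}<|ζ|<|q|^{-1/2}, the double-product expansion 1/((ζq^{1/2};q)_∞ (ζ⁻¹q^{1/2};q)_∞) = Σ_{n₁∈ℤ, n₂≥0} q^{|n₁|/2 + n₂} / ((q;q)_{n₂} (q;q)_{|n₁|+n₂}) ζ^{n₁} holds. -/

import Mathlib

noncomputable def qPoch (a q : ℂ) (n : ℕ) : ℂ := ∏ j ∈ Finset.range n, (1 - a * q ^ j)
noncomputable def qPochInf (a q : ℂ) : ℂ := ∏' j : ℕ, (1 - a * q ^ j)

open Finset Filter Complex Topology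

noncomputable def qc (q : ℂ) : ℝ :=
  Real.exp (-(‖q‖ / ((1 - ‖q‖) * (1 - ‖q‖))))

lemma qc_pos (q : ℂ) : 0 < qc q := Real.exp_pos _

lemma one_sub_ne (w : ℂ) (hw : ‖w‖ < 1) : 1 - w ≠ 0 := by
  intro h
  have : w = 1 := by linear_combination -h
  rw [this] at hw; simp at hw

lemma qPoch_factor_ne {q : ℂ} (hq1 : ‖q‖ < 1) (j : ℕ) : 1 - q * q ^ j ≠ 0 := by
  apply one_sub_ne
  have h0 : ‖q‖ ^ j ≤ 1 := pow_le_one₀ (norm_nonneg q) hq1.le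
  calc ‖q * q ^ j‖ = ‖q‖ * ‖q‖ ^ j := by
        simp [map_mul, map_pow]
    _ ≤ ‖q‖ * 1 := mul_le_mul_of_nonneg_left h0 (norm_nonneg q)
    _ < 1 := by simpa using hq1

lemma qPoch_ne {q : ℂ} (hq1 : ‖q‖ < 1) (n : ℕ) : qPoch q q n ≠ 0 := by
  rw [qPoch]
  exact Finset.prod_ne_zero_iff.2 fun j _ => qPoch_factor_ne hq1 j

lemma exp_le_one_sub {x r : ℝ} (hx : 0 ≤ x) (hxr : x ≤ r) (hr : r < 1) :
    Real.exp (-(x / (1 - r))) ≤ 1 - x := by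
  have hx1 : x < 1 := lt_of_le_of_lt hxr hr
  have h0 : (0:ℝ) < 1 - x := by linarith
  have hne : (1:ℝ) - x ≠ 0 := by linarith
  have h1 : (1 - x)⁻¹ ≤ Real.exp (x / (1 - x)) := by
    have h := Real.add_one_le_exp (x / (1 - x))
    have he : x / (1 - x) + 1 = (1 - x)⁻¹ := by
      field_simp
      ring
    linarith [he ▸ h]
  have h2 : Real.exp (-(x / (1 - x))) ≤ 1 - x := by
    rw [Real.exp_neg, inv_le_comm₀ (Real.exp_pos _) h0]
    exact h1
  calc Real.exp (-(x / (1 - r))) ≤ Real.exp (-(x / (1 - x))) := by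
        apply Real.exp_le_exp.2
        have h3 : x / (1 - x) ≤ x / (1 - r) :=
          div_le_div_of_nonneg_left hx (by linarith) (by linarith)
        linarith
    _ ≤ 1 - x := h2

lemma qPoch_lb {q : ℂ} (hq1 : ‖q‖ < 1) (n : ℕ) : qc q ≤ ‖qPoch q q n‖ := by
  set r := ‖q‖ with hr
  have hr0 : 0 ≤ r := norm_nonneg q
  have hden : (0:ℝ) < 1 - r := by linarith
  have hrpow : ∀ j : ℕ, (0:ℝ) ≤ r ^ (j+1) ∧ r ^ (j+1) ≤ r := by
    intro j
    refine ⟨by positivity, ?_⟩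
    calc r ^ (j+1) = r * r ^ j := by ring
      _ ≤ r * 1 := mul_le_mul_of_nonneg_left (pow_le_one₀ hr0 hq1.le) hr0
      _ = r := by ring
  have step1 : ∀ j : ℕ, 1 - r ^ (j+1) ≤ ‖1 - q * q ^ j‖ := by
    intro j
    have habs : ‖q * q ^ j‖ = r ^ (j+1) := by
      simp only [norm_mul, norm_pow, ← hr]; ring
    have := norm_sub_norm_le (1 : ℂ) (q * q ^ j)
    simp only [norm_one] at this
    rw [← habs]
    exact this
  have step2 : ∀ j : ℕ, Real.exp (-(r ^ (j+1) / (1 - r))) ≤ 1 - r ^ (j+1) := fun j =>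
    exp_le_one_sub (hrpow j).1 (hrpow j).2 hq1
  have habs : ‖qPoch q q n‖ = ∏ j ∈ range n, ‖1 - q * q ^ j‖ := by
    rw [qPoch]; exact norm_prod _ _
  have hchain : ∏ j ∈ range n, Real.exp (-(r ^ (j+1) / (1 - r)))
      ≤ ‖qPoch q q n‖ := by
    rw [habs]
    apply Finset.prod_le_prod
    · intro j _; positivity
    · intro j _; exact le_trans (step2 j) (step1 j)
  refine le_trans ?_ hchain
  rw [← Real.exp_sum]
  unfold qc
  rw [← hr]
  apply Real.exp_le_exp.2
  have hgeom : ∑ j ∈ range n, r ^ j ≤ (1 - r)⁻¹ := by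
    rw [geom_sum_eq hq1.ne]
    have he : (r ^ n - 1) / (r - 1) = (1 - r ^ n) / (1 - r) := by
      rw [← neg_div_neg_eq]; ring_nf
    rw [he, inv_eq_one_div]
    gcongr
    · nlinarith [pow_nonneg hr0 n]
  have hsum : ∑ j ∈ range n, r ^ (j+1) ≤ r / (1 - r) := by
    calc ∑ j ∈ range n, r ^ (j+1) = r * ∑ j ∈ range n, r ^ j := by
          rw [Finset.mul_sum]; exact Finset.sum_congr rfl fun j _ => by ring
      _ ≤ r * (1 - r)⁻¹ := mul_le_mul_of_nonneg_left hgeom hr0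
      _ = r / (1 - r) := by rw [div_eq_mul_inv]
  have hsplit : ∑ j ∈ range n, -(r ^ (j+1) / (1 - r))
      = -((∑ j ∈ range n, r ^ (j+1)) / (1 - r)) := by
    rw [Finset.sum_neg_distrib, Finset.sum_div]
  rw [hsplit]
  apply neg_le_neg
  rw [← div_div]
  gcongr

noncomputable def eulerF (q z : ℂ) : ℂ := ∑' n : ℕ, z ^ n / qPoch q q n

lemma norm_term_le {q : ℂ} (hq1 : ‖q‖ < 1) (z : ℂ) (n : ℕ) :
    ‖z ^ n / qPoch q q n‖ ≤ (qc q)⁻¹ * ‖z‖ ^ n := by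
  rw [norm_div, norm_pow]
  have h1 : qc q ≤ ‖qPoch q q n‖ := by exact qPoch_lb hq1 n
  calc ‖z‖ ^ n / ‖qPoch q q n‖ ≤ ‖z‖ ^ n / qc q :=
        div_le_div_of_nonneg_left (pow_nonneg (norm_nonneg z) n) (qc_pos q) h1
    _ = (qc q)⁻¹ * ‖z‖ ^ n := by rw [div_eq_mul_inv, mul_comm]

lemma summable_norm_term {q : ℂ} (hq1 : ‖q‖ < 1) {z : ℂ} (hz : ‖z‖ < 1) :
    Summable (fun n : ℕ => ‖z ^ n / qPoch q q n‖) := by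
  apply Summable.of_nonneg_of_le (fun n => norm_nonneg _) (norm_term_le hq1 z)
  exact (summable_geometric_of_lt_one (norm_nonneg z) hz).mul_left _

lemma summable_term {q : ℂ} (hq1 : ‖q‖ < 1) {z : ℂ} (hz : ‖z‖ < 1) :
    Summable (fun n : ℕ => z ^ n / qPoch q q n) :=
  (summable_norm_term hq1 hz).of_norm

lemma qPoch_succ (q : ℂ) (n : ℕ) : qPoch q q (n + 1) = qPoch q q n * (1 - q ^ (n + 1)) := by
  rw [qPoch, qPoch, Finset.prod_range_succ, pow_succ']

lemma funcEq {q : ℂ} (hq1 : ‖q‖ < 1) {z : ℂ} (hz : ‖z‖ < 1) :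
    (1 - z) * eulerF q z = eulerF q (q * z) := by
  have hqz : ‖q * z‖ < 1 := by
    rw [norm_mul]
    calc ‖q‖ * ‖z‖ ≤ 1 * ‖z‖ := by
          apply mul_le_mul_of_nonneg_right _ (norm_nonneg z)
          exact hq1.le
      _ < 1 := by simpa using hz
  have S1 := summable_term hq1 hz
  have S2 := summable_term hq1 hqz
  have key : eulerF q z - eulerF q (q * z) = z * eulerF q z := by
    have h1 : eulerF q z - eulerF q (q * z)
        = ∑' n : ℕ, (z ^ n / qPoch q q n - (q * z) ^ n / qPoch q q n) := by
      rw [eulerF, eulerF, ← Summable.tsum_sub S1 S2]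
    have Ssub : Summable (fun n : ℕ => z ^ n / qPoch q q n - (q * z) ^ n / qPoch q q n) :=
      S1.sub S2
    have h2 : ∑' n : ℕ, (z ^ n / qPoch q q n - (q * z) ^ n / qPoch q q n)
        = ∑' n : ℕ, z ^ (n + 1) / qPoch q q n := by
      rw [Summable.tsum_eq_zero_add Ssub]
      simp only [pow_zero]
      rw [sub_self, zero_add]
      apply tsum_congr
      intro n
      have hne : (1 : ℂ) - q ^ (n + 1) ≠ 0 := by
        have := qPoch_factor_ne hq1 n
        rw [← pow_succ'] at this
        exact this
      rw [qPoch_succ]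
      have hP := qPoch_ne hq1 n
      field_simp
      ring
    have h3 : ∑' n : ℕ, z ^ (n + 1) / qPoch q q n = z * eulerF q z := by
      rw [eulerF, ← tsum_mul_left]
      apply tsum_congr
      intro n
      rw [pow_succ']
      ring
    rw [h1, h2, h3]
  linear_combination key

lemma norm_pow_mul_lt {q z : ℂ} (hq1 : ‖q‖ < 1) (hz : ‖z‖ < 1) (N : ℕ) :
    ‖q ^ N * z‖ ≤ ‖z‖ := by
  rw [norm_mul, norm_pow]
  calc ‖q‖ ^ N * ‖z‖ ≤ 1 * ‖z‖ := by
        apply mul_le_mul_of_nonneg_right _ (norm_nonneg z)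
        apply pow_le_one₀ (norm_nonneg q)
        exact hq1.le
    _ = ‖z‖ := one_mul _

lemma iterEq {q : ℂ} (hq1 : ‖q‖ < 1) {z : ℂ} (hz : ‖z‖ < 1) (N : ℕ) :
    eulerF q z * ∏ j ∈ range N, (1 - z * q ^ j) = eulerF q (q ^ N * z) := by
  induction N with
  | zero => simp
  | succ N ih =>
    have hN : ‖q ^ N * z‖ < 1 := lt_of_le_of_lt (norm_pow_mul_lt hq1 hz N) hz
    rw [Finset.prod_range_succ, ← mul_assoc, ih]
    have := funcEq hq1 hN
    calc eulerF q (q ^ N * z) * (1 - z * q ^ N)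
        = (1 - q ^ N * z) * eulerF q (q ^ N * z) := by ring
      _ = eulerF q (q * (q ^ N * z)) := funcEq hq1 hN
      _ = eulerF q (q ^ (N + 1) * z) := by rw [← mul_assoc, ← pow_succ']

lemma eulerF_sub_one_bound {q : ℂ} (hq1 : ‖q‖ < 1) {z w : ℂ}
    (hz : ‖z‖ < 1) (hw : ‖w‖ ≤ ‖z‖) :
    ‖eulerF q w - 1‖ ≤ (qc q)⁻¹ * (1 - ‖z‖)⁻¹ * ‖w‖ := by
  have hw1 : ‖w‖ < 1 := lt_of_le_of_lt hw hz
  have Sw := summable_term hq1 hw1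
  have h1 : eulerF q w - 1 = ∑' n : ℕ, w ^ (n + 1) / qPoch q q (n + 1) := by
    rw [eulerF, Summable.tsum_eq_zero_add Sw]
    simp [qPoch]
  rw [h1]
  have hnorm : Summable (fun n : ℕ => ‖w ^ (n + 1) / qPoch q q (n + 1)‖) :=
    (summable_norm_term hq1 hw1).comp_injective (add_left_injective 1)
  have hgeo : Summable (fun n : ℕ => (qc q)⁻¹ * ‖w‖ ^ (n + 1)) := by
    apply Summable.mul_left
    exact (summable_geometric_of_lt_one (norm_nonneg w) hw1).comp_injective (add_left_injective 1)
  calc ‖∑' n : ℕ, w ^ (n + 1) / qPoch q q (n + 1)‖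
      ≤ ∑' n : ℕ, ‖w ^ (n + 1) / qPoch q q (n + 1)‖ := norm_tsum_le_tsum_norm hnorm
    _ ≤ ∑' n : ℕ, (qc q)⁻¹ * ‖w‖ ^ (n + 1) :=
        Summable.tsum_le_tsum (fun n => norm_term_le hq1 w (n + 1)) hnorm hgeo
    _ = (qc q)⁻¹ * ‖w‖ * (1 - ‖w‖)⁻¹ := by
        have : ∀ n : ℕ, (qc q)⁻¹ * ‖w‖ ^ (n + 1) = ((qc q)⁻¹ * ‖w‖) * ‖w‖ ^ n := by
          intro n; ring
        rw [tsum_congr this, tsum_mul_left, tsum_geometric_of_lt_one (norm_nonneg w) hw1]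
    _ ≤ (qc q)⁻¹ * (1 - ‖z‖)⁻¹ * ‖w‖ := by
        have h2 : (1 - ‖w‖)⁻¹ ≤ (1 - ‖z‖)⁻¹ := by
          apply inv_anti₀ (by linarith)
          linarith
        calc (qc q)⁻¹ * ‖w‖ * (1 - ‖w‖)⁻¹ ≤ (qc q)⁻¹ * ‖w‖ * (1 - ‖z‖)⁻¹ := by
              apply mul_le_mul_of_nonneg_left h2
              have := (qc_pos q).le
              positivity
          _ = (qc q)⁻¹ * (1 - ‖z‖)⁻¹ * ‖w‖ := by ring

lemma tendsto_eulerF_one {q : ℂ} (hq1 : ‖q‖ < 1) {z : ℂ} (hz : ‖z‖ < 1) :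
    Tendsto (fun N : ℕ => eulerF q (q ^ N * z)) atTop (𝓝 1) := by
  have key : Tendsto (fun N : ℕ => eulerF q (q ^ N * z) - 1) atTop (𝓝 0) := by
    apply squeeze_zero_norm (f := fun N => eulerF q (q ^ N * z) - 1)
      (a := fun N => (qc q)⁻¹ * (1 - ‖z‖)⁻¹ * (‖q‖ ^ N * ‖z‖))
    · intro N
      have := eulerF_sub_one_bound hq1 hz (norm_pow_mul_lt hq1 hz N)
      calc ‖eulerF q (q ^ N * z) - 1‖ ≤ (qc q)⁻¹ * (1 - ‖z‖)⁻¹ * ‖q ^ N * z‖ := this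
        _ = (qc q)⁻¹ * (1 - ‖z‖)⁻¹ * (‖q‖ ^ N * ‖z‖) := by rw [norm_mul, norm_pow]
    · have hq : ‖q‖ < 1 := by exact hq1
      have h1 : Tendsto (fun N : ℕ => ‖q‖ ^ N) atTop (𝓝 0) :=
        tendsto_pow_atTop_nhds_zero_of_lt_one (norm_nonneg q) hq
      have h2 := (h1.mul_const ‖z‖).const_mul ((qc q)⁻¹ * (1 - ‖z‖)⁻¹)
      simpa using h2
  have := key.add_const 1
  simpa using this

lemma multipliable_fact {q : ℂ} (hq1 : ‖q‖ < 1) {z : ℂ} (hz : ‖z‖ < 1) :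
    Multipliable (fun j : ℕ => 1 - z * q ^ j) := by
  have hfn : ∀ j : ℕ, (1 : ℂ) - z * q ^ j ≠ 0 := by
    intro j
    apply one_sub_ne
    rw [norm_mul, norm_pow]
    calc ‖z‖ * ‖q‖ ^ j ≤ ‖z‖ * 1 := by
          apply mul_le_mul_of_nonneg_left _ (norm_nonneg z)
          apply pow_le_one₀ (norm_nonneg q)
          exact hq1.le
      _ < 1 := by simpa using hz
  have hlog : Summable (fun j : ℕ => Complex.log (1 - z * q ^ j)) := by
    apply Summable.of_norm_bounded_eventually_nat (g := fun j => 3 / 2 * (‖z‖ * ‖q‖ ^ j))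
    · apply Summable.mul_left
      apply Summable.mul_left
      apply summable_geometric_of_lt_one (norm_nonneg q)
      exact hq1
    · have htend : Tendsto (fun j : ℕ => ‖z * q ^ j‖) atTop (𝓝 0) := by
        have hq : ‖q‖ < 1 := by exact hq1
        have h1 : Tendsto (fun j : ℕ => ‖q‖ ^ j) atTop (𝓝 0) :=
          tendsto_pow_atTop_nhds_zero_of_lt_one (norm_nonneg q) hq
        have := h1.const_mul ‖z‖
        simpa [norm_mul, norm_pow, mul_comm] using this
      have hev : ∀ᶠ j : ℕ in atTop, ‖z * q ^ j‖ ≤ 1 / 2 := by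
        have := htend.eventually_le_const (show (0:ℝ) < 1/2 by norm_num)
        simpa using this
      filter_upwards [hev] with j hj
      have h1 : (1 : ℂ) - z * q ^ j = 1 + -(z * q ^ j) := by ring
      rw [h1]
      have h2 : ‖-(z * q ^ j)‖ ≤ 1 / 2 := by rwa [norm_neg]
      calc ‖Complex.log (1 + -(z * q ^ j))‖ ≤ 3 / 2 * ‖-(z * q ^ j)‖ :=
            Complex.norm_log_one_add_half_le_self h2
        _ = 3 / 2 * (‖z‖ * ‖q‖ ^ j) := by rw [norm_neg, norm_mul, norm_pow]
  exact Complex.multipliable_of_summable_log hlog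

lemma euler {q : ℂ} (hq1 : ‖q‖ < 1) {z : ℂ} (hz : ‖z‖ < 1) :
    qPochInf z q * eulerF q z = 1 := by
  have hM := multipliable_fact hq1 hz
  have h1 : Tendsto (fun N : ℕ => eulerF q z * ∏ j ∈ range N, (1 - z * q ^ j)) atTop
      (𝓝 (eulerF q z * qPochInf z q)) := by
    exact (hM.hasProd.tendsto_prod_nat).const_mul _
  have h2 : (fun N : ℕ => eulerF q z * ∏ j ∈ range N, (1 - z * q ^ j))
      = fun N : ℕ => eulerF q (q ^ N * z) := funext fun N => iterEq hq1 hz N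
  rw [h2] at h1
  have h3 := tendsto_nhds_unique h1 (tendsto_eulerF_one hq1 hz)
  rw [mul_comm]
  exact h3

def signedIdx : ℤ × ℕ ≃ ℕ × ℕ where
  toFun x := (x.1.toNat + x.2, (-x.1).toNat + x.2)
  invFun p := ((p.1 : ℤ) - (p.2 : ℤ), min p.1 p.2)
  left_inv x := by
    obtain ⟨a, b⟩ := x
    simp only [Prod.mk.injEq]
    constructor
    · push_cast; omega
    · omega
  right_inv p := by
    obtain ⟨a, b⟩ := p
    simp only [Prod.mk.injEq]
    constructor <;> omega

lemma term_eq (q s ζ : ℂ) (hs : s ^ 2 = q) (hζ : ζ ≠ 0) (x : ℤ × ℕ) :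
    (ζ * s) ^ (x.1.toNat + x.2) / qPoch q q (x.1.toNat + x.2) *
      ((ζ⁻¹ * s) ^ ((-x.1).toNat + x.2) / qPoch q q ((-x.1).toNat + x.2))
    = s ^ x.1.natAbs * q ^ x.2 * ζ ^ x.1 /
        (qPoch q q x.2 * qPoch q q (x.1.natAbs + x.2)) := by
  obtain ⟨a, b⟩ := x
  rcases le_or_gt 0 a with h | h
  · lift a to ℕ using h
    have h1 : ((a : ℤ)).toNat = a := by omega
    have h2 : (-(a : ℤ)).toNat = 0 := by omega
    have h3 : ((a : ℤ)).natAbs = a := by omega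
    simp only [h1, h2, h3, zero_add]
    rw [zpow_natCast]
    have hnum : (ζ * s) ^ (a + b) * (ζ⁻¹ * s) ^ b = s ^ a * q ^ b * ζ ^ a := by
      rw [← hs]
      field_simp
      rw [div_pow]
      field_simp
      ring
    rw [div_mul_div_comm, hnum, mul_comm (qPoch q q (a + b)) (qPoch q q b)]
  · obtain ⟨n, rfl⟩ : ∃ n : ℕ, a = -(n : ℤ) := ⟨a.natAbs, by omega⟩
    have h1 : (-(n : ℤ)).toNat = 0 := by omega
    have h2 : (-(-(n : ℤ))).toNat = n := by omega
    have h3 : (-(n : ℤ)).natAbs = n := by omega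
    simp only [h1, h2, h3, zero_add]
    rw [zpow_neg, zpow_natCast]
    have hnum : (ζ * s) ^ b * (ζ⁻¹ * s) ^ (n + b) = s ^ n * q ^ b * (ζ ^ n)⁻¹ := by
      rw [← hs]
      field_simp
      rw [div_pow]
      field_simp
      ring
    rw [div_mul_div_comm, hnum]

/-- For 0<|q|<1 and |q|<|ζ|²<|q|⁻¹ (s a fixed square root of q),
1/((ζq^{1/2};q)_∞ (ζ⁻¹q^{1/2};q)_∞)
  = Σ_{n₁∈ℤ, n₂≥0} q^{|n₁|/2 + n₂} ζ^{n₁} / ((q;q)_{n₂} (q;q)_{|n₁|+n₂}). -/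
theorem stmt5 (q s ζ : ℂ) (hs : s ^ 2 = q) (hq0 : 0 < ‖q‖)
    (hq1 : ‖q‖ < 1) (hl : ‖q‖ < ‖ζ‖ ^ 2)
    (hr : ‖ζ‖ ^ 2 < ‖q‖⁻¹) :
    1 / (qPochInf (ζ * s) q * qPochInf (ζ⁻¹ * s) q)
      = ∑' x : ℤ × ℕ,
          s ^ x.1.natAbs * q ^ x.2 * ζ ^ x.1 /
            (qPoch q q x.2 * qPoch q q (x.1.natAbs + x.2)) := by
  have hζa : 0 < ‖ζ‖ := by nlinarith [norm_nonneg ζ]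
  have hζ : ζ ≠ 0 := by
    intro h
    rw [h] at hζa
    simp at hζa
  have habs_s : ‖s‖ ^ 2 = ‖q‖ := by rw [← norm_pow, hs]
  have hz1 : ‖ζ * s‖ < 1 := by
    have h2 : ‖ζ * s‖ ^ 2 < 1 := by
      rw [norm_mul, mul_pow, habs_s]
      calc ‖ζ‖ ^ 2 * ‖q‖ < (‖q‖)⁻¹ * ‖q‖ :=
            mul_lt_mul_of_pos_right hr hq0
        _ = 1 := inv_mul_cancel₀ hq0.ne'
    nlinarith [norm_nonneg (ζ * s)]
  have hz2 : ‖ζ⁻¹ * s‖ < 1 := by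
    have h2 : ‖ζ⁻¹ * s‖ ^ 2 < 1 := by
      rw [norm_mul, mul_pow, habs_s, norm_inv, inv_pow]
      have hp : (0:ℝ) < ‖ζ‖ ^ 2 := by positivity
      have h3 : (‖ζ‖ ^ 2)⁻¹ * ‖q‖
          < (‖ζ‖ ^ 2)⁻¹ * (‖ζ‖ ^ 2) :=
        mul_lt_mul_of_pos_left hl (by positivity)
      rwa [inv_mul_cancel₀ hp.ne'] at h3
    nlinarith [norm_nonneg (ζ⁻¹ * s)]
  have e1 := euler hq1 hz1
  have e2 := euler hq1 hz2
  have hP1 : qPochInf (ζ * s) q ≠ 0 := left_ne_zero_of_mul_eq_one e1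
  have hP2 : qPochInf (ζ⁻¹ * s) q ≠ 0 := left_ne_zero_of_mul_eq_one e2
  have hmain : 1 / (qPochInf (ζ * s) q * qPochInf (ζ⁻¹ * s) q)
      = eulerF q (ζ * s) * eulerF q (ζ⁻¹ * s) := by
    rw [div_eq_iff (mul_ne_zero hP1 hP2)]
    linear_combination (-(eulerF q (ζ⁻¹ * s) * qPochInf (ζ⁻¹ * s) q)) * e1 - e2
  have hprod : eulerF q (ζ * s) * eulerF q (ζ⁻¹ * s)
      = ∑' p : ℕ × ℕ, (ζ * s) ^ p.1 / qPoch q q p.1 * ((ζ⁻¹ * s) ^ p.2 / qPoch q q p.2) :=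
    tsum_mul_tsum_of_summable_norm (summable_norm_term hq1 hz1) (summable_norm_term hq1 hz2)
  rw [hmain, hprod,
    ← Equiv.tsum_eq signedIdx
      (fun p : ℕ × ℕ => (ζ * s) ^ p.1 / qPoch q q p.1 * ((ζ⁻¹ * s) ^ p.2 / qPoch q q p.2))]
  apply tsum_congr
  intro x
  simp only [signedIdx, Equiv.coe_fn_mk]
  exact term_eq q s ζ hs hζ x
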